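/- Let Σ be a signature matrix, A ∈ ℝ^{m×n}, and suppose AᵀΣA = P L D Lᵀ Pᵀ where P is a permutation, L unit lower triangular, and D symmetric invertible with eigendecomposition D = VΛVᵀ (V orthogonal, Λ diagonal invertible). Set Σ_n := sign(Λ), R := |Λ|^{1/2} Vᵀ Lᵀ Pᵀ, and H := AR⁻¹. Then Hᵀ Σ H = Σ_n and A = HR. -/

import Mathlib

/-!
Since `D = V Λ Vᵀ` and `|Λ|^{1/2} sign(Λ) |Λ|^{1/2} = Λ`, the factorization reads
`Aᵀ Σ A = Rᵀ Σₙ R`. The factor `R` is invertible, being a product of a nonsingular diagonal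
matrix, an orthogonal matrix, a unit triangular matrix and a permutation matrix, so
`(A R⁻¹)ᵀ Σ (A R⁻¹) = R⁻ᵀ (Rᵀ Σₙ R) R⁻¹ = Σₙ`.
-/

open Matrix

theorem Real.sqrt_abs_mul_sign_mul_sqrt_abs (x : ℝ) : √|x| * Real.sign x * √|x| = x := by
  rw [mul_right_comm, Real.mul_self_sqrt (abs_nonneg x)]
  rcases lt_trichotomy x 0 with hneg | rfl | hpos
  · rw [abs_of_neg hneg, Real.sign_of_neg hneg]; ring
  · simp
  · rw [abs_of_pos hpos, Real.sign_of_pos hpos]; ring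

namespace Matrix

theorem IsDiag.diagonal_sqrt_abs_mul_sign_mul {n : Type*} [Fintype n] [DecidableEq n]
    {Λ : Matrix n n ℝ} (hΛ : Λ.IsDiag) :
    diagonal (fun i => √|Λ i i|) * diagonal (fun i => Real.sign (Λ i i)) *
      diagonal (fun i => √|Λ i i|) = Λ := by
  simp only [diagonal_mul_diagonal, Real.sqrt_abs_mul_sign_mul_sqrt_abs]
  exact hΛ.diagonal_diag

theorem det_eq_one_of_isLowerTriangular {m R : Type*} [Fintype m] [LinearOrder m] [CommRing R]
    {L : Matrix m m R} (hL : L.IsLowerTriangular) (hdiag : ∀ i, L i i = 1) : L.det = 1 := by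
  simp [det_of_isLowerTriangular L hL, hdiag]

theorem transpose_mul_mul_inv_eq_of_congr {l n α : Type*} [Fintype l] [Fintype n]
    [DecidableEq n] [CommRing α] {A : Matrix l n α} {Sig : Matrix l l α} {R S : Matrix n n α}
    (hR : IsUnit R.det) (h : Aᵀ * Sig * A = Rᵀ * S * R) :
    (A * R⁻¹)ᵀ * Sig * (A * R⁻¹) = S := by
  rw [transpose_mul, transpose_nonsing_inv]
  calc Rᵀ⁻¹ * Aᵀ * Sig * (A * R⁻¹) = Rᵀ⁻¹ * (Aᵀ * Sig * A) * R⁻¹ := by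
        simp only [Matrix.mul_assoc]
    _ = (Rᵀ⁻¹ * Rᵀ) * S * (R * R⁻¹) := by rw [h]; simp only [Matrix.mul_assoc]
    _ = S := by
      rw [nonsing_inv_mul _ (isUnit_det_transpose _ hR), mul_nonsing_inv _ hR, one_mul, mul_one]

end Matrix

theorem bk_to_indefinite_qr_general {m n : ℕ} (Sig : Matrix (Fin m) (Fin m) ℝ)
    (A : Matrix (Fin m) (Fin n) ℝ)
    (P L D V Lam : Matrix (Fin n) (Fin n) ℝ) (σ : Equiv.Perm (Fin n))
    (hP : P = σ.permMatrix ℝ)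
    (hLlow : ∀ i j, i < j → L i j = 0) (hLunit : ∀ i, L i i = 1)
    (hDeig : D = V * Lam * Vᵀ) (hV : Vᵀ * V = 1)
    (hLam : Lam.IsDiag) (hLam0 : ∀ i, Lam i i ≠ 0)
    (hfac : Aᵀ * Sig * A = P * L * D * Lᵀ * Pᵀ) :
    let Sn : Matrix (Fin n) (Fin n) ℝ :=
      Matrix.diagonal (fun i => Real.sign (Lam i i))
    let R : Matrix (Fin n) (Fin n) ℝ :=
      Matrix.diagonal (fun i => Real.sqrt |Lam i i|) * Vᵀ * Lᵀ * Pᵀ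
    let H : Matrix (Fin m) (Fin n) ℝ := A * R⁻¹
    Hᵀ * Sig * H = Sn ∧ A = H * R := by
  intro Sn R H
  have hRdet : IsUnit R.det := by
    simp only [R, det_mul]
    refine (((?_ : IsUnit _).mul (isUnit_det_of_right_inverse hV)).mul ?_).mul ?_
    · rw [det_diagonal]
      exact isUnit_iff_ne_zero.2 <| Finset.prod_ne_zero_iff.2 fun i _ =>
        Real.sqrt_ne_zero'.2 (abs_pos.2 (hLam0 i))
    · rw [det_transpose, det_eq_one_of_isLowerTriangular (fun i j h => hLlow i j h) hLunit]
      exact isUnit_one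
    · rw [det_transpose, hP, det_permutation]
      exact (Equiv.Perm.sign σ).isUnit.map (Int.castRingHom ℝ)
  have hcongr : Rᵀ * Sn * R = P * L * D * Lᵀ * Pᵀ := by
    calc Rᵀ * Sn * R = P * L * (V * (diagonal (fun i => √|Lam i i|) * Sn *
          diagonal (fun i => √|Lam i i|)) * Vᵀ) * Lᵀ * Pᵀ := by
          simp only [R, transpose_mul, transpose_transpose, diagonal_transpose, Matrix.mul_assoc]
      _ = P * L * D * Lᵀ * Pᵀ := by rw [hLam.diagonal_sqrt_abs_mul_sign_mul, ← hDeig]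
  exact ⟨transpose_mul_mul_inv_eq_of_congr hRdet (hfac.trans hcongr.symm),
    (nonsing_inv_mul_cancel_right _ A hRdet).symm⟩

theorem bk_to_indefinite_qr {m n : ℕ} (Sig : Matrix (Fin m) (Fin m) ℝ)
    (A : Matrix (Fin m) (Fin n) ℝ)
    (P L D V Lam : Matrix (Fin n) (Fin n) ℝ) (σ : Equiv.Perm (Fin n))
    (hSig : Sig.IsDiag ∧ ∀ i, Sig i i = 1 ∨ Sig i i = -1)
    (hP : P = σ.permMatrix ℝ)
    (hLlow : ∀ i j, i < j → L i j = 0) (hLunit : ∀ i, L i i = 1)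
    (hDsym : Dᵀ = D) (hDeig : D = V * Lam * Vᵀ) (hV : Vᵀ * V = 1)
    (hLam : Lam.IsDiag) (hLam0 : ∀ i, Lam i i ≠ 0)
    (hfac : Aᵀ * Sig * A = P * L * D * Lᵀ * Pᵀ) :
    let Sn : Matrix (Fin n) (Fin n) ℝ :=
      Matrix.diagonal (fun i => Real.sign (Lam i i))
    let R : Matrix (Fin n) (Fin n) ℝ :=
      Matrix.diagonal (fun i => Real.sqrt |Lam i i|) * Vᵀ * Lᵀ * Pᵀ
    let H : Matrix (Fin m) (Fin n) ℝ := A * R⁻¹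
    Hᵀ * Sig * H = Sn ∧ A = H * R :=
  bk_to_indefinite_qr_general Sig A P L D V Lam σ hP hLlow hLunit hDeig hV hLam hLam0 hfac
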